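/- For every integer k > 0, if there exists some n ≥ 1 with b(n) − a(n) = k, then there exist infinitely many m ≥ 1 with b(m) − a(m) = k. -/

import Mathlib

/-- `a n` is the `n`-th positive integer `k` (1-indexed, in increasing order) such that
the fractional part `{k·√2}` is less than `1/2`. -/
noncomputable def a (n : ℕ) : ℕ :=
  Nat.nth (fun k => 0 < k ∧ Int.fract ((k : ℝ) * Real.sqrt 2) < 1 / 2) (n - 1)

/-- `b n` is the `n`-th positive integer `k` (1-indexed, in increasing order) such that
the fractional part `{k·√2}` is at least `1/2`. -/
noncomputable def b (n : ℕ) : ℕ :=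
  Nat.nth (fun k => 0 < k ∧ 1 / 2 ≤ Int.fract ((k : ℝ) * Real.sqrt 2)) (n - 1)

/-!
For a solution of `x² - 2y² = 1` with `y = 2z` put `δ = x - y√2 = 1 / (x + y√2)`, so that
`y√2 = x - δ` with `0 < yδ < 1`. Then `{j√2} = ((jx mod y) - jδ) / y` for `0 < j < y`, and since
`j ↦ jx mod y` permutes the nonzero residues, exactly `z` of `1, …, y - 1` have `{j√2} < 1/2`.
Moreover `{(y + j)√2} = {j√2} - δ`, so once `δ` is smaller than the distance of every `{j√2}`,
`j ≤ N`, to `0` and (from above) to `1/2`, the shift `j ↦ y + j` preserves the side of `1/2` on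
`1, …, N`. Counting gives `a (n + z) = a n + 2z` and `b (n + z) = b n + 2z`, and the Pell equation
has such solutions with `δ` arbitrarily small.
-/

open Finset Filter Topology
open scoped Classical

theorem Nat.card_filter_range_mul_mod {x y : ℕ} (h : x.Coprime y) (p : ℕ → Prop)
    [DecidablePred p] : #{j ∈ range y | p (j * x % y)} = #{j ∈ range y | p j} := by
  set f : ℕ → ℕ := fun j => j * x % y
  have hmaps : Set.MapsTo f (range y) (range y) := fun j hj =>
    mem_range.2 (Nat.mod_lt _ (pos_of_ne_zero (by rintro rfl; simp at hj)))
  have hinj : Set.InjOn f (range y) := fun i hi j hj hij =>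
    (Nat.ModEq.cancel_right_of_coprime h.symm hij).eq_of_lt_of_lt (mem_range.1 hi) (mem_range.1 hj)
  have hsurj := surjOn_of_injOn_of_card_le f hmaps hinj le_rfl
  refine card_nbij f (fun j hj => ?_) (hinj.mono fun j hj => ?_) fun r hr => ?_
  · simp only [coe_filter, Set.mem_ofPred_eq] at hj ⊢
    exact ⟨hmaps hj.1, hj.2⟩
  · simp only [coe_filter, Set.mem_ofPred_eq] at hj
    exact hj.1
  · simp only [coe_filter, Set.mem_ofPred_eq] at hr
    obtain ⟨j, hj, rfl⟩ := hsurj hr.1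
    exact ⟨j, by simp_all [f], rfl⟩

theorem Nat.infinite_of_forall_exists_le_count {p : ℕ → Prop} [DecidablePred p]
    (h : ∀ N, ∃ n, N ≤ Nat.count p n) : {k | p k}.Infinite := fun hfin => by
  obtain ⟨n, hn⟩ := h (#hfin.toFinset + 1)
  have : Nat.count p n ≤ #hfin.toFinset := Nat.count_le_card hfin n
  omega

theorem Nat.coprime_of_sq_eq_two_mul_sq_add_one {x y : ℕ} (h : x ^ 2 = 2 * y ^ 2 + 1) :
    x.Coprime y := by
  have h' : (x : ℤ) ^ 2 = 2 * (y : ℤ) ^ 2 + 1 := by exact_mod_cast h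
  exact Nat.isCoprime_iff_coprime.1 ⟨x, -(2 * y), by linear_combination h'⟩

theorem Nat.pos_of_sq_eq_two_mul_sq_add_one {x y : ℕ} (h : x ^ 2 = 2 * y ^ 2 + 1) : 0 < x :=
  Nat.pos_of_ne_zero (by rintro rfl; simp at h)

theorem Int.fract_add_intCast_sub {t δ : ℝ} (n : ℤ) (hδ₀ : 0 ≤ δ) (hδ : δ ≤ Int.fract t) :
    Int.fract (t + (n - δ)) = Int.fract t - δ := by
  refine Int.fract_eq_iff.2 ⟨by linarith, by linarith [Int.fract_lt_one t], ⌊t⌋ + n, ?_⟩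
  push_cast
  linarith [Int.floor_add_fract t]

theorem Int.fract_intCast_sub {δ : ℝ} (n : ℤ) (hδ₀ : 0 < δ) (hδ₁ : δ ≤ 1) :
    Int.fract (n - δ) = 1 - δ :=
  Int.fract_eq_iff.2 ⟨by linarith, by linarith, n - 1, by push_cast; ring⟩

def InLowerHalf (α : ℝ) (k : ℕ) : Prop := 0 < k ∧ Int.fract (k * α) < 1 / 2

def InUpperHalf (α : ℝ) (k : ℕ) : Prop := 0 < k ∧ 1 / 2 ≤ Int.fract (k * α)

theorem inUpperHalf_iff {α : ℝ} {k : ℕ} : InUpperHalf α k ↔ 0 < k ∧ ¬InLowerHalf α k := by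
  simp only [InUpperHalf, InLowerHalf, not_and, not_lt]
  tauto

theorem count_inLowerHalf_add_count_inUpperHalf (α : ℝ) (n : ℕ) :
    Nat.count (InLowerHalf α) n + Nat.count (InUpperHalf α) n = n - 1 := by
  induction n with
  | zero => simp
  | succ n ih =>
    simp only [Nat.count_succ, inUpperHalf_iff]
    rcases Nat.eq_zero_or_pos n with rfl | hn
    · simp [InLowerHalf]
    · split_ifs <;> grind

/-- Lowering `{jα}` by `δ` neither wraps it past `0` nor moves it across `1/2`. -/
def HalfStable (α δ : ℝ) (j : ℕ) : Prop :=
  δ ≤ Int.fract (j * α) ∧ (1 / 2 ≤ Int.fract (j * α) → 1 / 2 + δ ≤ Int.fract (j * α))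

theorem Irrational.eventually_halfStable {α : ℝ} (hα : Irrational α) {j : ℕ} (hj : j ≠ 0) :
    ∀ᶠ δ in 𝓝 0, HalfStable α δ j := by
  have hpos : 0 < Int.fract (j * α) := Int.fract_pos.2 ((hα.natCast_mul hj).ne_int _)
  have hhalf : Int.fract (j * α) ≠ 1 / 2 := by
    intro h
    apply (hα.natCast_mul (mul_ne_zero two_ne_zero hj)).ne_int (2 * ⌊j * α⌋ + 1)
    push_cast
    linarith [Int.floor_add_fract ((j : ℝ) * α)]
  refine (eventually_le_nhds hpos).and ?_
  rcases hhalf.lt_or_gt with hlt | hgt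
  · exact Eventually.of_forall fun δ h => absurd h (not_le.2 hlt)
  · filter_upwards [eventually_le_nhds (sub_pos.2 hgt)] with δ hδ _
    linarith

section Shift

variable {α δ : ℝ} {x y : ℕ} (hshift : (y : ℝ) * α = x - δ)

include hshift

theorem fract_add_mul_of_shift (hδ : 0 ≤ δ) {j : ℕ} (hj : δ ≤ Int.fract (j * α)) :
    Int.fract (((y + j : ℕ) : ℝ) * α) = Int.fract (j * α) - δ := by
  have : ((y + j : ℕ) : ℝ) * α = j * α + ((x : ℤ) - δ) := by push_cast; linarith
  rw [this, Int.fract_add_intCast_sub _ hδ hj]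

theorem inLowerHalf_add_iff (hδ : 0 ≤ δ) {j : ℕ} (hj : 0 < j) (hs : HalfStable α δ j) :
    InLowerHalf α (y + j) ↔ InLowerHalf α j := by
  unfold InLowerHalf
  rw [fract_add_mul_of_shift hshift hδ hs.1]
  constructor
  · rintro ⟨-, h⟩
    refine ⟨hj, lt_of_not_ge fun h' => ?_⟩
    linarith [hs.2 h']
  · rintro ⟨-, h⟩
    exact ⟨by omega, by linarith⟩

theorem not_inLowerHalf_of_shift (hδ₀ : 0 < δ) (hδ : δ ≤ 1 / 2) : ¬InLowerHalf α y := by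
  rintro ⟨-, h⟩
  rw [hshift, ← Int.cast_natCast, Int.fract_intCast_sub _ hδ₀ (by linarith)] at h
  linarith

theorem count_inLowerHalf_add (hδ₀ : 0 < δ) (hδ : δ ≤ 1 / 2) {c : ℕ}
    (hs : ∀ j ∈ Ico 1 c, HalfStable α δ j) :
    Nat.count (InLowerHalf α) (y + c) =
      Nat.count (InLowerHalf α) y + Nat.count (InLowerHalf α) c := by
  rw [Nat.count_add, add_right_inj]
  simp only [Nat.count_eq_card_filter_range]
  refine congrArg card (filter_congr fun j hj => ?_)
  rcases Nat.eq_zero_or_pos j with rfl | hj₀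
  · simpa [InLowerHalf] using not_inLowerHalf_of_shift hshift hδ₀ hδ
  · exact inLowerHalf_add_iff hshift hδ₀.le hj₀ (hs j (mem_Ico.2 ⟨hj₀, mem_range.1 hj⟩))

end Shift

theorem fract_mul_eq_of_shift {α δ : ℝ} {x y j : ℕ} (hshift : (y : ℝ) * α = x - δ) (hy : 0 < y)
    (hr : 0 < j * x % y) (hjδ₀ : 0 ≤ j * δ) (hjδ : j * δ < 1) :
    Int.fract (j * α) = ((j * x % y : ℕ) - j * δ) / y := by
  have hyR : (0 : ℝ) < y := by exact_mod_cast hy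
  have hry : ((j * x % y : ℕ) : ℝ) < y := by exact_mod_cast Nat.mod_lt _ hy
  have hr1 : (1 : ℝ) ≤ (j * x % y : ℕ) := by exact_mod_cast hr
  have hdiv : (y : ℝ) * (j * x / y : ℕ) + (j * x % y : ℕ) = (j : ℝ) * x := by
    exact_mod_cast Nat.div_add_mod (j * x) y
  refine Int.fract_eq_iff.2 ⟨div_nonneg (by linarith) hyR.le, (div_lt_one hyR).2 (by linarith),
    (j * x / y : ℕ), ?_⟩
  rw [Int.cast_natCast]
  field_simp
  linear_combination j * hshift - hdiv

section Period

variable {α δ : ℝ} {x z : ℕ} (hshift : ((2 * z : ℕ) : ℝ) * α = x - δ) (hcop : x.Coprime (2 * z))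
  (hδ₀ : 0 < δ) (hzδ : 2 * z * δ < 1)

include hshift hcop hδ₀ hzδ

theorem inLowerHalf_iff_mul_mod_mem {j : ℕ} (hj : j < 2 * z) :
    InLowerHalf α j ↔ j * x % (2 * z) ∈ Icc 1 z := by
  rcases Nat.eq_zero_or_pos j with rfl | hj₀
  · simp [InLowerHalf]
  set r := j * x % (2 * z)
  have hr : 0 < r := Nat.pos_of_ne_zero fun h0 =>
    (Nat.le_of_dvd hj₀ ((Nat.coprime_comm.1 hcop).dvd_of_dvd_mul_right
      (Nat.dvd_of_mod_eq_zero h0))).not_gt hj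
  have hjδ₀ : 0 < j * δ := mul_pos (by exact_mod_cast hj₀) hδ₀
  have hjδ : j * δ < 1 := by
    have : (j : ℝ) < 2 * z := by exact_mod_cast hj
    nlinarith
  have hz : (0 : ℝ) < 2 * z := by exact_mod_cast hj₀.trans hj
  simp only [InLowerHalf, hj₀, true_and, mem_Icc, Nat.one_le_iff_ne_zero.2 hr.ne',
    fract_mul_eq_of_shift hshift (by omega) hr hjδ₀.le hjδ]
  rw [div_lt_iff₀ (by exact_mod_cast hz)]
  push_cast
  constructor
  · intro h
    by_contra! hgt
    have : (z : ℝ) + 1 ≤ r := by exact_mod_cast hgt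
    linarith
  · intro h
    have : (r : ℝ) ≤ z := by exact_mod_cast h
    linarith

theorem count_inLowerHalf_period : Nat.count (InLowerHalf α) (2 * z) = z := by
  rw [Nat.count_eq_card_filter_range,
    filter_congr fun j hj => inLowerHalf_iff_mul_mod_mem hshift hcop hδ₀ hzδ (mem_range.1 hj),
    Nat.card_filter_range_mul_mod hcop (· ∈ Icc 1 z), filter_mem_eq_inter,
    inter_eq_right.2 fun r hr => mem_range.2 (by simp at hr; omega)]
  simp

end Period

section Nth

variable {α δ : ℝ} {x z : ℕ} (hshift : ((2 * z : ℕ) : ℝ) * α = x - δ) (hcop : x.Coprime (2 * z))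
  (hδ₀ : 0 < δ) (hδ : δ ≤ 1 / 2) (hzδ : 2 * z * δ < 1)

include hshift hcop hδ₀ hδ hzδ

theorem nth_inLowerHalf_count_add {A : ℕ} (hA : InLowerHalf α A)
    (hs : ∀ j ∈ Icc 1 A, HalfStable α δ j) :
    Nat.nth (InLowerHalf α) (Nat.count (InLowerHalf α) A + z) = 2 * z + A := by
  have hcount : Nat.count (InLowerHalf α) (2 * z + A) = Nat.count (InLowerHalf α) A + z := by
    rw [count_inLowerHalf_add hshift hδ₀ hδ fun j hj => hs j (Ico_subset_Icc_self hj),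
      count_inLowerHalf_period hshift hcop hδ₀ hzδ, add_comm]
  rw [← hcount]
  exact Nat.nth_count
    ((inLowerHalf_add_iff hshift hδ₀.le hA.1 (hs A (mem_Icc.2 ⟨hA.1, le_rfl⟩))).2 hA)

theorem count_inUpperHalf_add {c : ℕ} (hc : 0 < c) (hs : ∀ j ∈ Ico 1 c, HalfStable α δ j) :
    Nat.count (InUpperHalf α) (2 * z + c) = Nat.count (InUpperHalf α) c + z := by
  have h₁ := count_inLowerHalf_add_count_inUpperHalf α (2 * z + c)
  have h₂ := count_inLowerHalf_add_count_inUpperHalf α c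
  rw [count_inLowerHalf_add hshift hδ₀ hδ hs, count_inLowerHalf_period hshift hcop hδ₀ hzδ] at h₁
  omega

theorem nth_inUpperHalf_count_add {B : ℕ} (hB : InUpperHalf α B)
    (hs : ∀ j ∈ Icc 1 B, HalfStable α δ j) :
    Nat.nth (InUpperHalf α) (Nat.count (InUpperHalf α) B + z) = 2 * z + B := by
  rw [← count_inUpperHalf_add hshift hcop hδ₀ hδ hzδ hB.1
    fun j hj => hs j (Ico_subset_Icc_self hj)]
  have hstable := inLowerHalf_add_iff hshift hδ₀.le hB.1 (hs B (mem_Icc.2 ⟨hB.1, le_rfl⟩))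
  exact Nat.nth_count
    (inUpperHalf_iff.2 ⟨Nat.lt_add_left _ hB.1, hstable.not.2 (inUpperHalf_iff.1 hB).2⟩)

end Nth

section SqrtTwo

variable {x y : ℕ} (h : x ^ 2 = 2 * y ^ 2 + 1)
include h

theorem sub_mul_sqrt_two_eq_inv : (x : ℝ) - y * √2 = ((x : ℝ) + y * √2)⁻¹ := by
  have h' : (x : ℝ) ^ 2 = 2 * (y : ℝ) ^ 2 + 1 := by exact_mod_cast h
  refine eq_inv_of_mul_eq_one_left ?_
  linear_combination (norm := ring_nf) h'
  simp

theorem sub_mul_sqrt_two_pos : 0 < (x : ℝ) - y * √2 := by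
  have := Nat.pos_of_sq_eq_two_mul_sq_add_one h
  rw [sub_mul_sqrt_two_eq_inv h]
  positivity

theorem mul_sub_mul_sqrt_two_lt_one : y * ((x : ℝ) - y * √2) < 1 := by
  have hx : (1 : ℝ) ≤ x := by exact_mod_cast Nat.pos_of_sq_eq_two_mul_sq_add_one h
  have : (y : ℝ) ≤ y * √2 := le_mul_of_one_le_right (Nat.cast_nonneg y) Real.one_lt_sqrt_two.le
  rw [sub_mul_sqrt_two_eq_inv h, ← div_eq_mul_inv, div_lt_one (by positivity)]
  linarith

end SqrtTwo

/-- `pellX m ^ 2 - 8 * pellZ m ^ 2 = 1`: the Pell sequence of `a = 3`, `d = a² - 1 = 8`. -/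
def pellX (m : ℕ) : ℕ := Pell.xn (a := 3) (by norm_num) m

def pellZ (m : ℕ) : ℕ := Pell.yn (a := 3) (by norm_num) m

theorem pellX_sq (m : ℕ) : pellX m ^ 2 = 2 * (2 * pellZ m) ^ 2 + 1 := by
  have h := Pell.pell_eqz (a := 3) (by norm_num) m
  rw [Pell.dz_val] at h
  simp only [Pell.xz, Pell.yz, Pell.az] at h
  have : (pellX m : ℤ) ^ 2 = 2 * (2 * (pellZ m : ℤ)) ^ 2 + 1 := by
    unfold pellX pellZ
    linear_combination h
  exact_mod_cast this

noncomputable def pellDefect (m : ℕ) : ℝ := pellX m - ((2 * pellZ m : ℕ) : ℝ) * √2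

theorem pellDefect_shift (m : ℕ) :
    ((2 * pellZ m : ℕ) : ℝ) * √2 = pellX m - pellDefect m := by
  rw [pellDefect]
  ring

theorem pellX_coprime (m : ℕ) : (pellX m).Coprime (2 * pellZ m) :=
  Nat.coprime_of_sq_eq_two_mul_sq_add_one (pellX_sq m)

theorem pellDefect_pos (m : ℕ) : 0 < pellDefect m :=
  sub_mul_sqrt_two_pos (pellX_sq m)

theorem mul_pellDefect_lt_one (m : ℕ) : 2 * pellZ m * pellDefect m < 1 := by
  exact_mod_cast mul_sub_mul_sqrt_two_lt_one (pellX_sq m)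

theorem pellZ_strictMono : StrictMono pellZ := Pell.strictMono_y _

theorem tendsto_pellDefect : Tendsto pellDefect atTop (𝓝 0) := by
  have hx : Tendsto (fun m => (pellX m : ℝ)) atTop atTop :=
    tendsto_natCast_atTop_atTop.comp (Pell.strictMono_x _).tendsto_atTop
  have := tendsto_inv_atTop_zero.comp
    (hx.atTop_add_nonneg fun m => by positivity : Tendsto
      (fun m => (pellX m : ℝ) + ((2 * pellZ m : ℕ) : ℝ) * √2) atTop atTop)
  refine this.congr fun m => ?_
  simp only [Function.comp_apply, pellDefect, sub_mul_sqrt_two_eq_inv (pellX_sq m)]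

theorem eventually_pellDefect_halfStable (N : ℕ) :
    ∀ᶠ m in atTop, pellDefect m ≤ 1 / 2 ∧ ∀ j ∈ Icc 1 N, HalfStable √2 (pellDefect m) j :=
  tendsto_pellDefect.eventually <| (eventually_le_nhds (by norm_num)).and <|
    (eventually_all_finset _).2 fun j hj =>
      irrational_sqrt_two.eventually_halfStable (by simp only [mem_Icc] at hj; omega)

theorem count_inLowerHalf_sqrt_two_pell (m : ℕ) :
    Nat.count (InLowerHalf √2) (2 * pellZ m) = pellZ m :=
  count_inLowerHalf_period (pellDefect_shift m) (pellX_coprime m) (pellDefect_pos m)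
    (mul_pellDefect_lt_one m)

theorem infinite_inLowerHalf_sqrt_two : {k | InLowerHalf √2 k}.Infinite :=
  Nat.infinite_of_forall_exists_le_count fun N =>
    ⟨2 * pellZ N, (count_inLowerHalf_sqrt_two_pell N).symm ▸ Pell.yn_ge_n _ N⟩

theorem infinite_inUpperHalf_sqrt_two : {k | InUpperHalf √2 k}.Infinite :=
  Nat.infinite_of_forall_exists_le_count fun N => by
    refine ⟨2 * pellZ (N + 1), ?_⟩
    have h₁ := count_inLowerHalf_add_count_inUpperHalf √2 (2 * pellZ (N + 1))
    have h₂ : N + 1 ≤ pellZ (N + 1) := Pell.yn_ge_n _ _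
    rw [count_inLowerHalf_sqrt_two_pell] at h₁
    omega

theorem eventually_a_add_pellZ {n : ℕ} (hn : 1 ≤ n) :
    ∀ᶠ m in atTop, a (n + pellZ m) = 2 * pellZ m + a n := by
  have hA : InLowerHalf √2 (a n) := Nat.nth_mem_of_infinite infinite_inLowerHalf_sqrt_two _
  have hcount : Nat.count (InLowerHalf √2) (a n) = n - 1 :=
    Nat.count_nth_of_infinite infinite_inLowerHalf_sqrt_two _
  filter_upwards [eventually_pellDefect_halfStable (a n)] with m ⟨hδ, hs⟩
  rw [← nth_inLowerHalf_count_add (pellDefect_shift m) (pellX_coprime m) (pellDefect_pos m) hδ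
    (mul_pellDefect_lt_one m) hA hs, hcount]
  unfold a
  congr 1
  omega

theorem eventually_b_add_pellZ {n : ℕ} (hn : 1 ≤ n) :
    ∀ᶠ m in atTop, b (n + pellZ m) = 2 * pellZ m + b n := by
  have hB : InUpperHalf √2 (b n) := Nat.nth_mem_of_infinite infinite_inUpperHalf_sqrt_two _
  have hcount : Nat.count (InUpperHalf √2) (b n) = n - 1 :=
    Nat.count_nth_of_infinite infinite_inUpperHalf_sqrt_two _
  filter_upwards [eventually_pellDefect_halfStable (b n)] with m ⟨hδ, hs⟩
  rw [← nth_inUpperHalf_count_add (pellDefect_shift m) (pellX_coprime m) (pellDefect_pos m) hδ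
    (mul_pellDefect_lt_one m) hB hs, hcount]
  unfold b
  congr 1
  omega

theorem stmt_16 (k : ℤ)
    (hex : ∃ n : ℕ, 1 ≤ n ∧ (b n : ℤ) - (a n : ℤ) = k) :
    {m : ℕ | 1 ≤ m ∧ (b m : ℤ) - (a m : ℤ) = k}.Infinite := by
  obtain ⟨n, hn, hk⟩ := hex
  obtain ⟨M, hM⟩ := eventually_atTop.1
    ((eventually_a_add_pellZ hn).and (eventually_b_add_pellZ hn))
  refine Set.infinite_of_injective_forall_mem (f := fun m => n + pellZ (M + m))
    (fun m m' h => add_left_cancel (pellZ_strictMono.injective (add_left_cancel h)))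
    fun m => ⟨by omega, ?_⟩
  obtain ⟨ha, hb⟩ := hM (M + m) (Nat.le_add_right M m)
  rw [ha, hb]
  push_cast
  linarith
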